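/- Let D₁, D₂ be semilocal Prüfer domains with standard decompositions Θ₁, Θ₂. Suppose there is an order isomorphism ν : hiSpec(D₁) → hiSpec(D₂). Then there is an order isomorphism ν̄ : SkOver(D₁) → SkOver(D₂) (both ordered by inclusion) such that: (1) ν̄ restricts to a bijection from Θ₁ to Θ₂; and (2) for every P ∈ hiSpec(D₁) and every T ∈ Θ₁, PT = T if and only if ν(P)ν̄(T) = ν̄(T). -/

import Mathlib

/- Common background: Prüfer domains, semistar and (fractional) star operations,
standard decomposition, skeleton, supports, `hiSpec`, the rings `Z(P)`,
and the invariants `ω` and `ε`, following Spirito,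
"Semistar operations on semilocal Prüfer domains". -/

set_option linter.unusedSectionVars false
set_option maxHeartbeats 1000000

open Pointwise

noncomputable section

namespace Paper

variable (D : Type*) [CommRing D] [IsDomain D]
variable (K : Type*) [Field K] [Algebra D K] [IsFractionRing D K]

/-- The localization of `D` at a prime ideal `P`, viewed as an overring of `D`
inside its quotient field `K`. -/
def locAt (P : Ideal D) (hP : P.IsPrime) : Subalgebra D K :=
  Localization.subalgebra K (@Ideal.primeCompl D _ P hP)
    (fun _ hx => mem_nonZeroDivisors_of_ne_zero fun h => hx (h ▸ P.zero_mem))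

/-- A Prüfer domain: every localization at a prime ideal is a valuation domain
(any two elements are comparable w.r.t. divisibility). -/
def IsPrufer : Prop :=
  ∀ (P : Ideal D) (hP : P.IsPrime), ∀ x y : locAt D K P hP, ∃ z, x * z = y ∨ y * z = x

/-- A semilocal ring: finitely many maximal ideals. -/
def IsSemilocal : Prop := {I : Ideal D | I.IsMaximal}.Finite

/-- Two ideals are dependent if some nonzero prime ideal is contained in both. -/
def Dependent (M N : Ideal D) : Prop :=
  ∃ P : Ideal D, P.IsPrime ∧ P ≠ ⊥ ∧ P ≤ M ∧ P ≤ N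

/-- The member of the standard decomposition corresponding to the dependence class
of the maximal ideal `M`: the intersection of the localizations of `D` at the
maximal ideals dependent on `M`. -/
def TOf (M : Ideal D) : Subalgebra D K :=
  sInf {A | ∃ (N : Ideal D) (hN : N.IsMaximal), Dependent D M N ∧ A = locAt D K N hN.isPrime}

/-- The standard decomposition of `D`. -/
def stdDecomp : Set (Subalgebra D K) :=
  {T | ∃ M : Ideal D, M.IsMaximal ∧ T = TOf D K M}

/-- The skeleton of `Over(D)`: all intersections of subsets of the standard
decomposition (including the empty intersection `K` and the total one `D`). -/
def SkOver : Set (Subalgebra D K) :=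
  {A | ∃ S ⊆ stdDecomp D K, A = sInf S}

/-- `I` is a fractional ideal of the overring `A` of `D`: it is an `A`-submodule
of `K` and `dI ⊆ A` for some nonzero `d ∈ K`. -/
def IsFracOf (A : Subalgebra D K) (I : Submodule D K) : Prop :=
  (∀ a ∈ A, ∀ x ∈ I, a * x ∈ I) ∧ ∃ d : K, d ≠ 0 ∧ ∀ x ∈ I, d * x ∈ A

end Paper

namespace Paper

/-- A semistar operation on a domain `R` with quotient field `K`: an extensive,
order-preserving, idempotent self-map of the set of `R`-submodules of `K` such
that `(xI)^⋆ = x·I^⋆` for every nonzero `x ∈ K`. -/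
structure Semistar (R : Type*) [CommRing R] (K : Type*) [Field K] [Algebra R K] where
  toFun : Submodule R K → Submodule R K
  le_star' : ∀ I, I ≤ toFun I
  mono' : ∀ ⦃I J⦄, I ≤ J → toFun I ≤ toFun J
  idem' : ∀ I, toFun (toFun I) = toFun I
  smul' : ∀ (x : K), x ≠ 0 → ∀ I,
    toFun (Submodule.span R {x} * I) = Submodule.span R {x} * toFun I

namespace Semistar

variable {R : Type*} [CommRing R] {K : Type*} [Field K] [Algebra R K]

theorem ext' {s t : Semistar R K} (h : s.toFun = t.toFun) : s = t := by
  cases s; cases t; cases h; rfl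

instance : PartialOrder (Semistar R K) where
  le s t := ∀ I, s.toFun I ≤ t.toFun I
  le_refl _ _ := le_rfl
  le_trans _ _ _ hab hbc I := (hab I).trans (hbc I)
  le_antisymm _ _ h h' := ext' (funext fun I => le_antisymm (h I) (h' I))

end Semistar

/-- The identity semistar operation `d`. -/
def dOp (R : Type*) [CommRing R] (K : Type*) [Field K] [Algebra R K] : Semistar R K where
  toFun I := I
  le_star' _ := le_rfl
  mono' _ _ h := h
  idem' _ := rfl
  smul' _ _ _ := rfl

end Paper

namespace Paper

variable (D : Type*) [CommRing D] [IsDomain D]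
variable (K : Type*) [Field K] [Algebra D K] [IsFractionRing D K]

/-- A fractional star operation on an overring `A` of `D` (inside `K`): a
semistar-like closure operation defined on the fractional ideals of `A`.
In particular `FracStar D K ⊥` is the set of fractional star operations on `D`. -/
structure FracStar (A : Subalgebra D K) where
  toFun : {I : Submodule D K // IsFracOf D K A I} → {I : Submodule D K // IsFracOf D K A I}
  le_star' : ∀ I, I.1 ≤ (toFun I).1
  mono' : ∀ I J, I.1 ≤ J.1 → (toFun I).1 ≤ (toFun J).1
  idem' : ∀ I, toFun (toFun I) = toFun I
  smul' : ∀ (x : K), x ≠ 0 → ∀ I J, J.1 = Submodule.span D {x} * I.1 →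
    (toFun J).1 = Submodule.span D {x} * (toFun I).1

namespace FracStar

variable {D K} {A : Subalgebra D K}

theorem ext' {s t : FracStar D K A} (h : s.toFun = t.toFun) : s = t := by
  cases s; cases t; cases h; rfl

instance : PartialOrder (FracStar D K A) where
  le s t := ∀ I, (s.toFun I).1 ≤ (t.toFun I).1
  le_refl _ _ := le_rfl
  le_trans _ _ _ hab hbc I := (hab I).trans (hbc I)
  le_antisymm _ _ h h' := ext' (funext fun I => Subtype.ext (le_antisymm (h I) (h' I)))

end FracStar

/-- A fractional star operation on the overring `A` is a *star operation* if it
closes `A` itself. -/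
def FracStar.IsStarOp {A : Subalgebra D K} (f : FracStar D K A) : Prop :=
  ∀ h : IsFracOf D K A (Subalgebra.toSubmodule A),
    (f.toFun ⟨Subalgebra.toSubmodule A, h⟩).1 = Subalgebra.toSubmodule A

/-- The support of a semistar operation on `D`: the elements `A` of the skeleton
such that `A^⋆` is a fractional ideal of `A`. -/
def supp (s : Semistar D K) : Set (Subalgebra D K) :=
  {A | A ∈ SkOver D K ∧ IsFracOf D K A (s.toFun (Subalgebra.toSubmodule A))}

/-- The image of an ideal of `D` inside `K`. -/
def idealToK (P : Ideal D) : Submodule D K := Submodule.map (Algebra.linearMap D K) P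

end Paper

namespace Paper

/-- An abstract fractional star operation on a commutative ring `A`, acting on
the fractional ideals of `A` inside its fraction ring. -/
structure AFracStar (A : Type*) [CommRing A] where
  toFun : FractionalIdeal (nonZeroDivisors A) (FractionRing A) →
    FractionalIdeal (nonZeroDivisors A) (FractionRing A)
  le_star' : ∀ I, I ≤ toFun I
  mono' : ∀ ⦃I J⦄, I ≤ J → toFun I ≤ toFun J
  idem' : ∀ I, toFun (toFun I) = toFun I
  smul' : ∀ (x : FractionRing A), x ≠ 0 → ∀ I,
    toFun (FractionalIdeal.spanSingleton (nonZeroDivisors A) x * I) =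
      FractionalIdeal.spanSingleton (nonZeroDivisors A) x * toFun I

namespace AFracStar

variable {A : Type*} [CommRing A]

theorem ext' {s t : AFracStar A} (h : s.toFun = t.toFun) : s = t := by
  cases s; cases t; cases h; rfl

instance : PartialOrder (AFracStar A) where
  le s t := ∀ I, s.toFun I ≤ t.toFun I
  le_refl _ _ := le_rfl
  le_trans _ _ _ hab hbc I := (hab I).trans (hbc I)
  le_antisymm _ _ h h' := ext' (funext fun I => le_antisymm (h I) (h' I))

end AFracStar

/-- Abstract star operations on `A`: fractional star operations closing `A`. -/
def AStar (A : Type*) [CommRing A] : Type _ := {s : AFracStar A // s.toFun 1 = 1}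

instance (A : Type*) [CommRing A] : PartialOrder (AStar A) :=
  inferInstanceAs (PartialOrder {s : AFracStar A // s.toFun 1 = 1})

end Paper

namespace Paper

variable (D : Type*) [CommRing D] [IsDomain D]

/-- `P` is a branching point of `Spec(D)`: the infimum (among the primes) of a
family of pairwise incomparable primes not containing `P`. -/
def IsBranchPoint (P : Ideal D) : Prop :=
  ∃ S : Set (Ideal D), (∀ Q ∈ S, Q.IsPrime) ∧
    (S.Pairwise fun Q₁ Q₂ => ¬Q₁ ≤ Q₂ ∧ ¬Q₂ ≤ Q₁) ∧ P ∉ S ∧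
    (∀ Q ∈ S, P ≤ Q) ∧ ∀ P' : Ideal D, P'.IsPrime → (∀ Q ∈ S, P' ≤ Q) → P' ≤ P

/-- The homeomorphically irreducible tree underlying `Spec(D)`: the zero ideal,
the maximal ideals and the branching points, ordered by inclusion. -/
def hiSpec : Set (Ideal D) :=
  {P | P.IsPrime ∧ (P = ⊥ ∨ P.IsMaximal ∨ IsBranchPoint D P)}

/-- `Q` is the element of `hiSpec D` directly below `P`. -/
def DirectlyBelow (Q P : Ideal D) : Prop :=
  Q ∈ hiSpec D ∧ P ∈ hiSpec D ∧ Q < P ∧ ∀ R ∈ hiSpec D, Q < R → ¬R < P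

/-- The localization of `D` at the prime ideal `P`, as an abstract ring. -/
abbrev locRing (P : Ideal D) (hP : P.IsPrime) : Type _ :=
  Localization (@Ideal.primeCompl D _ P hP)

/-- The valuation ring `Z(P) = D_P / Q·D_P`. -/
abbrev Zring (P Q : Ideal D) (hP : P.IsPrime) : Type _ :=
  locRing D P hP ⧸ Ideal.map (algebraMap D (locRing D P hP)) Q

/-- `ω(P) = |FStar(Z(P))|`, where `Q` is the element of `hiSpec D` directly
below `P`. -/
def omegaAt (P Q : Ideal D) (hP : P.IsPrime) : ℕ :=
  Nat.card (AFracStar (Zring D P Q hP))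

open Classical in
/-- `ε(P) = |Star(D_P)| ∈ {1,2}` for a (nonzero) prime `P`. -/
def epsilonOf (A : Ideal D) : ℕ :=
  if h : A.IsPrime then Nat.card (AStar (locRing D A h)) else 0

end Paper

namespace Paper

theorem mem_hiSpec_prime {D : Type*} [CommRing D] [IsDomain D] {P : Ideal D}
    (h : P ∈ hiSpec D) : P.IsPrime := h.1

theorem maximal_mem_hiSpec {D : Type*} [CommRing D] [IsDomain D] {M : Ideal D}
    (h : M.IsMaximal) : M ∈ hiSpec D := ⟨h.isPrime, Or.inr (Or.inl h)⟩

end Paper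

/-! The members `T_M` of the standard decomposition are independent: an intersection of some of
them lies in `T_N` only if `N = 0` or one of them equals `T_N`, and `T_M = T_N` exactly when `M`
and `N` are dependent. Both facts come from prime avoidance in the semilocal ring together with
the comparability of the primes below a given prime. Two primes of `hiSpec` are dependent iff
some nonzero element of `hiSpec` lies below both, because the largest prime below two
incomparable primes is a branching point; so `ν` preserves dependence, and `⋂ T_M ↦ ⋂ T_{ν M}`
is a well defined isomorphism of skeleta. Finally `P T_M = T_M` iff `P ≠ 0` and `P` lies in no
maximal ideal dependent on `M`, which is again a condition on `hiSpec`. -/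

namespace Paper

section sInfTransfer

variable {ι α β : Type*} [CompleteLattice α] [CompleteLattice β]

def sInfTransfer (t₁ : ι → α) (t₂ : ι → β) (A : α) : β :=
  sInf (t₂ '' {i | A ≤ t₁ i})

lemma sInfTransfer_mono (t₁ : ι → α) (t₂ : ι → β) : Monotone (sInfTransfer t₁ t₂) :=
  fun _ _ h => sInf_le_sInf (Set.image_mono fun _ hi => h.trans hi)

lemma sInfTransfer_sInf_image {t₁ : ι → α} {t₂ : ι → β}
    (H : ∀ S i, sInf (t₁ '' S) ≤ t₁ i → sInf (t₂ '' S) ≤ t₂ i) (S : Set ι) :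
    sInfTransfer t₁ t₂ (sInf (t₁ '' S)) = sInf (t₂ '' S) :=
  le_antisymm (sInf_le_sInf (Set.image_mono fun _ hi => sInf_le (Set.mem_image_of_mem t₁ hi)))
    (le_sInf (by rintro _ ⟨i, hi, rfl⟩; exact H S i hi))

lemma setOf_sInf_subset_range (t : ι → α) :
    {A | ∃ S ⊆ Set.range t, A = sInf S} = Set.range fun S : Set ι => sInf (t '' S) := by
  ext A
  constructor
  · rintro ⟨S, hS, rfl⟩
    exact ⟨t ⁻¹' S, congrArg sInf (Set.image_preimage_eq_of_subset hS)⟩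
  · rintro ⟨S, rfl⟩
    exact ⟨_, Set.image_subset_range t S, rfl⟩

theorem exists_orderIso_sInf_closure {t₁ : ι → α} {t₂ : ι → β} {Θ₁ : Set α} {Θ₂ : Set β}
    (h₁ : Set.range t₁ = Θ₁) (h₂ : Set.range t₂ = Θ₂)
    (H : ∀ S i, sInf (t₁ '' S) ≤ t₁ i ↔ sInf (t₂ '' S) ≤ t₂ i) :
    ∃ Φ : {A | ∃ S ⊆ Θ₁, A = sInf S} ≃o {B | ∃ S ⊆ Θ₂, B = sInf S},
      (∀ A, A.1 ∈ Θ₁ ↔ (Φ A).1 ∈ Θ₂) ∧ ∀ A i, A.1 = t₁ i → (Φ A).1 = t₂ i := by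
  subst h₁ h₂
  rw [setOf_sInf_subset_range, setOf_sInf_subset_range]
  have H₁₂ := sInfTransfer_sInf_image fun S i => (H S i).1
  have H₂₁ := sInfTransfer_sInf_image fun S i => (H S i).2
  have single₁₂ (i : ι) : sInfTransfer t₁ t₂ (t₁ i) = t₂ i := by simpa using H₁₂ {i}
  have single₂₁ (i : ι) : sInfTransfer t₂ t₁ (t₂ i) = t₁ i := by simpa using H₂₁ {i}
  let Φ : Set.range (fun S => sInf (t₁ '' S)) ≃ Set.range (fun S => sInf (t₂ '' S)) :=
    { toFun A := ⟨sInfTransfer t₁ t₂ A, _, rfl⟩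
      invFun B := ⟨sInfTransfer t₂ t₁ B, _, rfl⟩
      left_inv := by
        rintro ⟨_, S, rfl⟩
        exact Subtype.ext ((congrArg _ (H₁₂ S)).trans (H₂₁ S))
      right_inv := by
        rintro ⟨_, S, rfl⟩
        exact Subtype.ext ((congrArg _ (H₂₁ S)).trans (H₁₂ S)) }
  refine ⟨Φ.toOrderIso (fun _ _ h => sInfTransfer_mono t₁ t₂ h)
    (fun _ _ h => sInfTransfer_mono t₂ t₁ h), fun A => ⟨?_, ?_⟩, ?_⟩
  · rintro ⟨i, hi⟩
    exact ⟨i, show t₂ i = sInfTransfer t₁ t₂ A by rw [← hi, single₁₂]⟩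
  · rintro ⟨i, hi⟩
    refine ⟨i, ?_⟩
    rw [← Φ.left_inv A]
    show t₁ i = sInfTransfer t₂ t₁ (sInfTransfer t₁ t₂ A)
    rw [← single₂₁ i]
    exact congrArg _ hi
  · rintro A i hA
    show sInfTransfer t₁ t₂ A = t₂ i
    rw [hA, single₁₂]

end sInfTransfer

lemma isPrime_sSup_of_isChain {R : Type*} [CommRing R] {s : Set (Ideal R)} (hs : s.Nonempty)
    (hc : IsChain (· ≤ ·) s) (hp : ∀ P ∈ s, P.IsPrime) : (sSup s).IsPrime := by
  have mem (x : R) : x ∈ sSup s ↔ ∃ P ∈ s, x ∈ P := Submodule.mem_sSup_of_directed hs hc.directedOn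
  refine ⟨fun h => ?_, fun {x y} hxy => ?_⟩
  · obtain ⟨P, hP, h1⟩ := (mem 1).1 (h ▸ Submodule.mem_top)
    exact (hp P hP).ne_top ((Ideal.eq_top_iff_one _).2 h1)
  · obtain ⟨P, hP, hxyP⟩ := (mem _).1 hxy
    exact ((hp P hP).mem_or_mem hxyP).imp (fun h => (mem x).2 ⟨P, hP, h⟩)
      (fun h => (mem y).2 ⟨P, hP, h⟩)

lemma isBranchPoint_of_isGreatest {D : Type*} [CommRing D] [IsDomain D] {M N R : Ideal D}
    (hM : M.IsPrime) (hN : N.IsPrime) (hMN : ¬M ≤ N) (hNM : ¬N ≤ M)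
    (hR : IsGreatest {Q | Q.IsPrime ∧ Q ≤ M ∧ Q ≤ N} R) : IsBranchPoint D R := by
  refine ⟨{M, N}, ?_, Set.pairwise_pair.2 fun _ => ⟨⟨hMN, hNM⟩, hNM, hMN⟩, ?_, ?_, ?_⟩
  · rintro Q (rfl | rfl) <;> assumption
  · rintro (rfl | rfl)
    exacts [hMN hR.1.2.2, hNM hR.1.2.1]
  · rintro Q (rfl | rfl)
    exacts [hR.1.2.1, hR.1.2.2]
  · exact fun P hP h => hR.2 ⟨hP, h M (.inl rfl), h N (.inr rfl)⟩

section Prufer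

variable {D : Type*} [CommRing D] [IsDomain D]
variable {K : Type*} [Field K] [Algebra D K] [IsFractionRing D K]

lemma mem_locAt_iff {P : Ideal D} (hP : P.IsPrime) {x : K} :
    x ∈ locAt D K P hP ↔ ∃ a, ∃ s ∉ P, x * algebraMap D K s = algebraMap D K a := by
  constructor
  · rintro ⟨a, s, hs, rfl⟩
    exact ⟨a, s, hs, IsLocalization.mk'_spec K a ⟨s, _⟩⟩
  · rintro ⟨a, s, hs, h⟩
    exact ⟨a, s, hs, IsLocalization.eq_mk'_iff_mul_eq.2 h⟩

lemma inv_algebraMap_mem_locAt {P : Ideal D} (hP : P.IsPrime) {s : D} (hs : s ∉ P) :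
    (algebraMap D K s)⁻¹ ∈ locAt D K P hP := by
  have hs0 : s ≠ 0 := by rintro rfl; exact hs P.zero_mem
  refine (mem_locAt_iff hP).2 ⟨1, s, hs, ?_⟩
  rw [inv_mul_cancel₀ (IsFractionRing.to_map_eq_zero_iff.not.2 hs0), map_one]

lemma algebraMap_mul_ne_of_notMem {M P : Ideal D} (hM : M.IsPrime) (hP : P.IsPrime)
    (hPM : P ≤ M) {p q : D} (hp : p ∈ P) (hq : q ∉ P) {z : K} (hz : z ∈ locAt D K M hM) :
    algebraMap D K p * z ≠ algebraMap D K q := by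
  intro h
  obtain ⟨a, s, hs, hza⟩ := (mem_locAt_iff hM).1 hz
  have hqs : q * s = p * a :=
    IsFractionRing.injective D K (by simp only [map_mul, ← h, ← hza]; ring)
  rcases hP.mem_or_mem (hqs ▸ P.mul_mem_right a hp) with h | h
  exacts [hq h, hs (hPM h)]

lemma inv_algebraMap_notMem_locAt {P : Ideal D} (hP : P.IsPrime) {a : D} (haP : a ∈ P)
    (ha0 : a ≠ 0) : (algebraMap D K a)⁻¹ ∉ locAt D K P hP := by
  refine fun h => algebraMap_mul_ne_of_notMem hP hP le_rfl haP (P.ne_top_iff_one.1 hP.ne_top) h ?_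
  rw [mul_inv_cancel₀ (IsFractionRing.to_map_eq_zero_iff.not.2 ha0), map_one]

lemma IsPrufer.le_or_le_of_le (hp : IsPrufer D K) {M P Q : Ideal D} (hM : M.IsPrime)
    (hP : P.IsPrime) (hQ : Q.IsPrime) (hPM : P ≤ M) (hQM : Q ≤ M) : P ≤ Q ∨ Q ≤ P := by
  by_contra! h
  obtain ⟨p, hpP, hpQ⟩ := SetLike.not_le_iff_exists.1 h.1
  obtain ⟨q, hqQ, hqP⟩ := SetLike.not_le_iff_exists.1 h.2
  obtain ⟨z, hz | hz⟩ := hp M hM ⟨_, (locAt D K M hM).algebraMap_mem p⟩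
    ⟨_, (locAt D K M hM).algebraMap_mem q⟩
  · exact algebraMap_mul_ne_of_notMem hM hP hPM hpP hqP z.2 (congrArg Subtype.val hz)
  · exact algebraMap_mul_ne_of_notMem hM hQ hQM hqQ hpQ z.2 (congrArg Subtype.val hz)

lemma IsPrufer.exists_isGreatest_primes_le (hp : IsPrufer D K) {M N : Ideal D} (hM : M.IsPrime)
    (hne : {Q | Q.IsPrime ∧ Q ≤ M ∧ Q ≤ N}.Nonempty) :
    ∃ R, IsGreatest {Q | Q.IsPrime ∧ Q ≤ M ∧ Q ≤ N} R := by
  have hc : IsChain (· ≤ ·) {Q | Q.IsPrime ∧ Q ≤ M ∧ Q ≤ N} :=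
    fun P hP Q hQ _ => hp.le_or_le_of_le hM hP.1 hQ.1 hP.2.1 hQ.2.1
  exact ⟨_, ⟨isPrime_sSup_of_isChain hne hc fun P hP => hP.1, sSup_le fun Q hQ => hQ.2.1,
    sSup_le fun Q hQ => hQ.2.2⟩, fun _ hQ => le_sSup hQ⟩

lemma Dependent.symm {M N : Ideal D} (h : Dependent D M N) : Dependent D N M :=
  let ⟨P, hP, hP0, hPM, hPN⟩ := h
  ⟨P, hP, hP0, hPN, hPM⟩

lemma Dependent.trans (hp : IsPrufer D K) {M N L : Ideal D} (hN : N.IsPrime)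
    (h₁ : Dependent D M N) (h₂ : Dependent D N L) : Dependent D M L := by
  obtain ⟨P, hP, hP0, hPM, hPN⟩ := h₁
  obtain ⟨Q, hQ, hQ0, hQN, hQL⟩ := h₂
  rcases hp.le_or_le_of_le hN hP hQ hPN hQN with h | h
  exacts [⟨P, hP, hP0, hPM, h.trans hQL⟩, ⟨Q, hQ, hQ0, h.trans hPM, hQL⟩]

lemma TOf_eq_of_dependent (hp : IsPrufer D K) {M N : Ideal D} (hM : M.IsPrime) (hN : N.IsPrime)
    (h : Dependent D M N) : TOf D K M = TOf D K N := by
  unfold TOf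
  congr 1
  ext A
  constructor
  · rintro ⟨L, hL, hML, rfl⟩
    exact ⟨L, hL, h.symm.trans hp hM hML, rfl⟩
  · rintro ⟨L, hL, hNL, rfl⟩
    exact ⟨L, hL, h.trans hp hN hNL, rfl⟩

lemma TOf_le_locAt {M N : Ideal D} (hN : N.IsMaximal) (h : Dependent D M N) :
    TOf D K M ≤ locAt D K N hN.isPrime :=
  sInf_le ⟨N, hN, h, rfl⟩

lemma TOf_bot : TOf D K ⊥ = ⊤ :=
  sInf_eq_top.2 fun _ ⟨_, _, ⟨_, _, hP0, hP, _⟩, _⟩ => absurd (le_bot_iff.1 hP) hP0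

lemma inv_algebraMap_mem_TOf {M : Ideal D} {a : D}
    (ha : ∀ N, N.IsMaximal → Dependent D M N → a ∉ N) : (algebraMap D K a)⁻¹ ∈ TOf D K M :=
  Algebra.mem_sInf.2 fun _ ⟨N, hN, hMN, hA⟩ => hA ▸ inv_algebraMap_mem_locAt _ (ha N hN hMN)

lemma exists_mem_ne_zero_forall_notMem (hsl : IsSemilocal D) {I : Ideal D} (hI : I ≠ ⊥)
    {G : Set (Ideal D)} (hG : ∀ N ∈ G, N.IsMaximal) (h : ∀ N ∈ G, ¬I ≤ N) :
    ∃ a ∈ I, a ≠ 0 ∧ ∀ N ∈ G, a ∉ N := by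
  have hfin : (insert ⊥ G).Finite := (hsl.subset hG).insert ⊥
  have hnot : ¬(I : Set D) ⊆ ⋃ N ∈ insert ⊥ G, ((id N : Ideal D) : Set D) := by
    rw [Ideal.subset_union_prime_finite (f := id) hfin ⊥ ⊥
      fun N hN hN0 _ => (hG N (hN.resolve_left hN0)).isPrime]
    rintro ⟨N, rfl | hN, hle⟩
    exacts [hI (le_bot_iff.1 hle), h N hN hle]
  obtain ⟨a, haI, ha⟩ := Set.not_subset.1 hnot
  simp only [Set.mem_iUnion, Set.mem_insert_iff, not_exists, SetLike.mem_coe, id] at ha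
  exact ⟨a, haI, fun h0 => ha ⊥ (.inl rfl) (h0 ▸ Submodule.zero_mem _),
    fun N hN => ha N (.inr hN)⟩

lemma sInf_image_TOf_le_TOf_iff (hp : IsPrufer D K) (hsl : IsSemilocal D) {S : Set (Ideal D)}
    (hS : ∀ M ∈ S, M.IsMaximal) {N : Ideal D} (hN : N.IsMaximal) :
    sInf (TOf D K '' S) ≤ TOf D K N ↔ N = ⊥ ∨ ∃ M ∈ S, Dependent D M N := by
  constructor
  · intro hle
    by_contra! h
    -- `a⁻¹`, for a nonzero `a ∈ N` avoiding every maximal ideal dependent on a member of `S`,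
    -- lies in every `T_M` with `M ∈ S` but not in `D_N ⊇ T_N`
    obtain ⟨a, haN, ha0, ha⟩ := exists_mem_ne_zero_forall_notMem hsl h.1
      (G := {N' | N'.IsMaximal ∧ ∃ M ∈ S, Dependent D M N'}) (fun _ hN' => hN'.1)
      (by
        rintro N' ⟨hN', M, hM, hMN'⟩ hle
        exact h.2 M hM (hN.eq_of_le hN'.ne_top hle ▸ hMN'))
    have hmem : (algebraMap D K a)⁻¹ ∈ sInf (TOf D K '' S) := Algebra.mem_sInf.2 <| by
      rintro _ ⟨M, hM, rfl⟩
      exact inv_algebraMap_mem_TOf fun N' hN' hMN' => ha N' ⟨hN', M, hM, hMN'⟩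
    exact inv_algebraMap_notMem_locAt hN.isPrime haN ha0
      (TOf_le_locAt hN ⟨N, hN.isPrime, h.1, le_rfl, le_rfl⟩ (hle hmem))
  · rintro (rfl | ⟨M, hM, hMN⟩)
    · rw [TOf_bot]
      exact le_top
    · rw [← TOf_eq_of_dependent hp (hS M hM).isPrime hN.isPrime hMN]
      exact sInf_le (Set.mem_image_of_mem _ hM)

lemma idealToK_mul_eq_self_iff {I : Ideal D} {A : Subalgebra D K} :
    idealToK D K I * Subalgebra.toSubmodule A = Subalgebra.toSubmodule A ↔
      (1 : K) ∈ idealToK D K I * Subalgebra.toSubmodule A := by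
  refine ⟨fun h => by rw [h]; exact A.one_mem, fun h => le_antisymm ?_ fun t ht => ?_⟩
  · rw [Submodule.mul_le]
    rintro _ ⟨d, -, rfl⟩ t ht
    exact (Algebra.smul_def d t).symm ▸ A.smul_mem ht d
  · have := Submodule.mul_mem_mul h ht
    rwa [one_mul, mul_assoc, (Subalgebra.isIdempotentElem_toSubmodule A).eq] at this

lemma one_notMem_idealToK_mul_locAt {N : Ideal D} (hN : N.IsPrime) :
    (1 : K) ∉ idealToK D K N * Subalgebra.toSubmodule (locAt D K N hN) := by
  suffices ∀ x ∈ idealToK D K N * Subalgebra.toSubmodule (locAt D K N hN),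
      ∃ s ∉ N, ∃ n ∈ N, algebraMap D K s * x = algebraMap D K n by
    intro h1
    obtain ⟨s, hs, n, hn, h⟩ := this 1 h1
    rw [mul_one] at h
    exact hs (IsFractionRing.injective D K h ▸ hn)
  intro x hx
  refine Submodule.mul_induction_on hx ?_ ?_
  · rintro _ ⟨d, hd, rfl⟩ t ht
    obtain ⟨a, s, hs, hts⟩ := (mem_locAt_iff hN).1 ht
    refine ⟨s, hs, d * a, N.mul_mem_right a hd, ?_⟩
    simp only [Algebra.linearMap_apply, map_mul, ← hts]
    ring
  · rintro x y ⟨s₁, hs₁, n₁, hn₁, hx⟩ ⟨s₂, hs₂, n₂, hn₂, hy⟩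
    refine ⟨s₁ * s₂, fun h => (hN.mem_or_mem h).elim hs₁ hs₂, s₂ * n₁ + s₁ * n₂,
      N.add_mem (N.mul_mem_left s₂ hn₁) (N.mul_mem_left s₁ hn₂), ?_⟩
    simp only [map_mul, map_add, ← hx, ← hy]
    ring

lemma idealToK_mul_TOf_eq_self_iff (hsl : IsSemilocal D) {P M : Ideal D} :
    idealToK D K P * Subalgebra.toSubmodule (TOf D K M) = Subalgebra.toSubmodule (TOf D K M) ↔
      P ≠ ⊥ ∧ ∀ N, N.IsMaximal → Dependent D M N → ¬P ≤ N := by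
  rw [idealToK_mul_eq_self_iff]
  constructor
  · intro h1
    refine ⟨?_, fun N hN hMN hPN => one_notMem_idealToK_mul_locAt hN.isPrime <|
      mul_le_mul' (Submodule.map_mono hPN) (TOf_le_locAt hN hMN) h1⟩
    rintro rfl
    rw [idealToK, Submodule.map_bot, Submodule.bot_mul, Submodule.mem_bot] at h1
    exact one_ne_zero h1
  · rintro ⟨hP0, hP⟩
    obtain ⟨a, haP, ha0, ha⟩ := exists_mem_ne_zero_forall_notMem hsl hP0
      (G := {N | N.IsMaximal ∧ Dependent D M N}) (fun _ hN => hN.1) fun N hN => hP N hN.1 hN.2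
    have h := Submodule.mul_mem_mul (Submodule.mem_map_of_mem (f := Algebra.linearMap D K) haP)
      (show _ ∈ Subalgebra.toSubmodule (TOf D K M) from
        inv_algebraMap_mem_TOf fun N hN hMN => ha N ⟨hN, hMN⟩)
    rwa [Algebra.linearMap_apply,
      mul_inv_cancel₀ (IsFractionRing.to_map_eq_zero_iff.not.2 ha0)] at h

end Prufer

section hiSpec

variable {D : Type*} [CommRing D] [IsDomain D]
variable {K : Type*} [Field K] [Algebra D K] [IsFractionRing D K]
variable {D' : Type*} [CommRing D'] [IsDomain D']
variable {K' : Type*} [Field K'] [Algebra D' K'] [IsFractionRing D' K']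

instance : OrderBot (hiSpec D) where
  bot := ⟨⊥, Ideal.isPrime_bot, .inl rfl⟩
  bot_le x := (bot_le : ⊥ ≤ x.1)

lemma hiSpec.coe_eq_bot_iff {x : hiSpec D} : x.1 = ⊥ ↔ x = ⊥ :=
  ⟨fun h => Subtype.ext h, fun h => h ▸ rfl⟩

lemma hiSpec.isMax_iff_isMaximal (x : hiSpec D) : IsMax x ↔ x.1.IsMaximal := by
  refine ⟨fun h => ?_, fun h y hxy => (h.eq_of_le y.2.1.ne_top hxy).ge⟩
  obtain ⟨M, hM, hxM⟩ := Ideal.exists_le_maximal x.1 x.2.1.ne_top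
  rwa [le_antisymm hxM (h (b := ⟨M, maximal_mem_hiSpec hM⟩) hxM)]

lemma IsPrufer.dependent_iff_exists_ne_bot (hp : IsPrufer D K) (x y : hiSpec D) :
    Dependent D x.1 y.1 ↔ ∃ r : hiSpec D, r ≠ ⊥ ∧ r ≤ x ∧ r ≤ y := by
  refine ⟨fun ⟨P, hP, hP0, hPx, hPy⟩ => ?_,
    fun ⟨r, hr0, hrx, hry⟩ => ⟨r.1, r.2.1, hiSpec.coe_eq_bot_iff.not.2 hr0, hrx, hry⟩⟩
  have ne_bot {r : hiSpec D} (h : P ≤ r.1) : r ≠ ⊥ :=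
    hiSpec.coe_eq_bot_iff.not.1 (ne_bot_of_le_ne_bot hP0 h)
  by_cases hxy : x ≤ y
  · exact ⟨x, ne_bot hPx, le_rfl, hxy⟩
  by_cases hyx : y ≤ x
  · exact ⟨y, ne_bot hPy, hyx, le_rfl⟩
  obtain ⟨R, hR⟩ := hp.exists_isGreatest_primes_le x.2.1 ⟨P, hP, hPx, hPy⟩
  exact ⟨⟨R, hR.1.1, .inr (.inr (isBranchPoint_of_isGreatest x.2.1 y.2.1 hxy hyx hR))⟩,
    ne_bot (hR.2 ⟨hP, hPx, hPy⟩), hR.1.2⟩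

lemma dependent_map_iff (hp : IsPrufer D K) (hp' : IsPrufer D' K')
    (e : hiSpec D ≃o hiSpec D') (x y : hiSpec D) :
    Dependent D' (e x).1 (e y).1 ↔ Dependent D x.1 y.1 := by
  rw [hp'.dependent_iff_exists_ne_bot, hp.dependent_iff_exists_ne_bot, e.surjective.exists]
  simp only [ne_eq, map_eq_bot_iff, OrderIso.le_iff_le]

lemma range_TOf_map (e : hiSpec D ≃o hiSpec D') :
    Set.range (fun x : {x : hiSpec D // IsMax x} => TOf D' K' (e x.1).1) = stdDecomp D' K' := by
  ext T
  constructor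
  · rintro ⟨x, rfl⟩
    exact ⟨_, (hiSpec.isMax_iff_isMaximal _).1 (e.isMax_apply.2 x.2), rfl⟩
  · rintro ⟨M, hM, rfl⟩
    refine ⟨⟨e.symm ⟨M, maximal_mem_hiSpec hM⟩,
      e.symm.isMax_apply.2 ((hiSpec.isMax_iff_isMaximal _).2 hM)⟩, ?_⟩
    simp only [OrderIso.apply_symm_apply]

lemma sInf_TOf_map_le_iff (hp : IsPrufer D K) (hp' : IsPrufer D' K') (hsl' : IsSemilocal D')
    (e : hiSpec D ≃o hiSpec D') (S : Set {x : hiSpec D // IsMax x})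
    (i : {x : hiSpec D // IsMax x}) :
    sInf ((fun x => TOf D' K' (e x.1).1) '' S) ≤ TOf D' K' (e i.1).1 ↔
      i.1 = ⊥ ∨ ∃ x ∈ S, Dependent D x.1.1 i.1.1 := by
  have hmax (x : {x : hiSpec D // IsMax x}) : (e x.1).1.IsMaximal :=
    (hiSpec.isMax_iff_isMaximal _).1 (e.isMax_apply.2 x.2)
  rw [← Set.image_image (TOf D' K') fun x : {x : hiSpec D // IsMax x} => (e x.1).1,
    sInf_image_TOf_le_TOf_iff hp' hsl' (by rintro _ ⟨x, -, rfl⟩; exact hmax x) (hmax i),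
    Set.exists_mem_image, hiSpec.coe_eq_bot_iff, map_eq_bot_iff]
  simp only [dependent_map_iff hp hp']

lemma idealToK_mul_TOf_eq_self_iff_hiSpec (hsl : IsSemilocal D) (P x : hiSpec D) :
    idealToK D K P.1 * Subalgebra.toSubmodule (TOf D K x.1) =
        Subalgebra.toSubmodule (TOf D K x.1) ↔
      P ≠ ⊥ ∧ ∀ y : hiSpec D, IsMax y → Dependent D x.1 y.1 → ¬P ≤ y := by
  rw [idealToK_mul_TOf_eq_self_iff hsl, ne_eq, hiSpec.coe_eq_bot_iff]
  refine and_congr_right fun _ => ⟨fun h y hy => h y.1 ((hiSpec.isMax_iff_isMaximal y).1 hy),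
    fun h N hN => h ⟨N, maximal_mem_hiSpec hN⟩ ((hiSpec.isMax_iff_isMaximal _).2 hN)⟩

lemma idealToK_mul_TOf_map_eq_self_iff (hp : IsPrufer D K) (hp' : IsPrufer D' K')
    (hsl : IsSemilocal D) (hsl' : IsSemilocal D') (e : hiSpec D ≃o hiSpec D') (P x : hiSpec D) :
    idealToK D' K' (e P).1 * Subalgebra.toSubmodule (TOf D' K' (e x).1) =
        Subalgebra.toSubmodule (TOf D' K' (e x).1) ↔
      idealToK D K P.1 * Subalgebra.toSubmodule (TOf D K x.1) =
        Subalgebra.toSubmodule (TOf D K x.1) := by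
  rw [idealToK_mul_TOf_eq_self_iff_hiSpec hsl', idealToK_mul_TOf_eq_self_iff_hiSpec hsl,
    e.surjective.forall]
  simp only [ne_eq, map_eq_bot_iff, e.isMax_apply, dependent_map_iff hp hp', e.le_iff_le]

end hiSpec

/-- An order isomorphism `ν : hiSpec(D₁) → hiSpec(D₂)` induces an
order isomorphism `ν̄ : SkOver(D₁) → SkOver(D₂)` restricting to a bijection between
the standard decompositions, and such that `P·T = T` iff `ν(P)·ν̄(T) = ν̄(T)`. -/
theorem statement8
    (D₁ : Type*) [CommRing D₁] [IsDomain D₁]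
    (K₁ : Type*) [Field K₁] [Algebra D₁ K₁] [IsFractionRing D₁ K₁]
    (D₂ : Type*) [CommRing D₂] [IsDomain D₂]
    (K₂ : Type*) [Field K₂] [Algebra D₂ K₂] [IsFractionRing D₂ K₂]
    (hp₁ : IsPrufer D₁ K₁) (hsl₁ : IsSemilocal D₁)
    (hp₂ : IsPrufer D₂ K₂) (hsl₂ : IsSemilocal D₂)
    (ν : ↥(hiSpec D₁) ≃o ↥(hiSpec D₂)) :
    ∃ νbar : ↥(SkOver D₁ K₁) ≃o ↥(SkOver D₂ K₂),
      (∀ T : ↥(SkOver D₁ K₁), T.1 ∈ stdDecomp D₁ K₁ ↔ (νbar T).1 ∈ stdDecomp D₂ K₂) ∧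
      ∀ (P : ↥(hiSpec D₁)) (T : ↥(SkOver D₁ K₁)), T.1 ∈ stdDecomp D₁ K₁ →
        (idealToK D₁ K₁ P.1 * Subalgebra.toSubmodule T.1 = Subalgebra.toSubmodule T.1 ↔
          idealToK D₂ K₂ (ν P).1 * Subalgebra.toSubmodule (νbar T).1 =
            Subalgebra.toSubmodule (νbar T).1) := by
  have hrange₁ := range_TOf_map (K' := K₁) (OrderIso.refl (hiSpec D₁))
  obtain ⟨νbar, hstd, hνbar⟩ : ∃ Φ : SkOver D₁ K₁ ≃o SkOver D₂ K₂,
      (∀ T : SkOver D₁ K₁, T.1 ∈ stdDecomp D₁ K₁ ↔ (Φ T).1 ∈ stdDecomp D₂ K₂) ∧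
      ∀ (T : SkOver D₁ K₁) (i : {x : hiSpec D₁ // IsMax x}), T.1 = TOf D₁ K₁ i.1.1 →
        (Φ T).1 = TOf D₂ K₂ (ν i.1).1 :=
    exists_orderIso_sInf_closure hrange₁ (range_TOf_map ν) fun S i =>
      (sInf_TOf_map_le_iff hp₁ hp₁ hsl₁ (OrderIso.refl _) S i).trans
        (sInf_TOf_map_le_iff hp₁ hp₂ hsl₂ ν S i).symm
  refine ⟨νbar, hstd, fun P T hT => ?_⟩
  obtain ⟨i, hi⟩ := hrange₁ ▸ hT
  rw [hνbar T i hi.symm, ← hi]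
  exact (idealToK_mul_TOf_map_eq_self_iff hp₁ hp₂ hsl₁ hsl₂ ν P i.1).symm

end Paper
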